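/- arXiv:2605.27478 — 4 statements merged into one kernel-verified Lean document; each statement's English description precedes it below -/
import Mathlib

section
/- Let Ω and E be measurable spaces, R a probability measure on Ω, Π : Ω → E a measurable map, and ν := Π_*R the pushforward of R under Π. Let μ be a probability measure on E with μ ≪ ν and H(μ|ν) < ∞, and set G := dμ/dν. Then the measure P* on Ω defined by dP*/dR = G ∘ Π (i.e. P* = R with density G∘Π) is a probability measure, its pushforward under Π equals μ, and H(P*|R) = H(μ|ν). -/
open MeasureTheory

/-- Relative entropy (Kullback–Leibler divergence) of `P` with respect to `Q`:
`H(P|Q) = ∫ log (dP/dQ) dP` when `P ≪ Q` and this integral is well defined (finite),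
and `+∞` otherwise. -/
noncomputable def relEntropy {Ω : Type*} [MeasurableSpace Ω] (P Q : Measure Ω) : EReal :=
  open scoped Classical in
  if P ≪ Q ∧ Integrable (fun ω => Real.log (P.rnDeriv Q ω).toReal) P then
    ((∫ ω, Real.log (P.rnDeriv Q ω).toReal ∂P : ℝ) : EReal)
  else ⊤

/-- Existence-and-value part of the variational identification of the reference-based SBTS
entropy projection: with `ν := Π_* R` and `G := dμ/dν`, the measure `P* = (G ∘ Π) · R`
is a probability measure, its pushforward under `Π` is `μ`, and `H(P*|R) = H(μ|ν)`. -/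
theorem reference_based_sbts_existence_and_value
    {Ω E : Type*} [MeasurableSpace Ω] [MeasurableSpace E]
    (R : Measure Ω) [IsProbabilityMeasure R]
    (pr : Ω → E) (hpr : Measurable pr)
    (μ : Measure E) [IsProbabilityMeasure μ]
    (hac : μ ≪ R.map pr)
    (hfin : relEntropy μ (R.map pr) < ⊤) :
    IsProbabilityMeasure (R.withDensity fun ω => μ.rnDeriv (R.map pr) (pr ω)) ∧
    (R.withDensity fun ω => μ.rnDeriv (R.map pr) (pr ω)).map pr = μ ∧
    relEntropy (R.withDensity fun ω => μ.rnDeriv (R.map pr) (pr ω)) R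
      = relEntropy μ (R.map pr) := by
  set ν := R.map pr with hν
  set G := μ.rnDeriv ν with hG
  have hGm : Measurable G := Measure.measurable_rnDeriv μ ν
  have hInt : Integrable (fun x => Real.log (G x).toReal) μ := by
    by_contra h
    have h' : ¬Integrable (fun x => Real.log (μ.rnDeriv ν x).toReal) μ := h
    simp [relEntropy, hac, h'] at hfin
  set f : Ω → ENNReal := fun ω => G (pr ω) with hf
  have hfm : Measurable f := hGm.comp hpr
  set P := R.withDensity f with hP
  -- pushforward
  have hmap : P.map pr = μ := by
    ext s hs
    rw [Measure.map_apply hpr hs, hP, withDensity_apply _ (hpr hs),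
      ← setLIntegral_map hs hGm hpr, ← hν, Measure.setLIntegral_rnDeriv hac]
  have hprob : IsProbabilityMeasure P := by
    constructor
    have h := congrArg (fun m : Measure E => m Set.univ) hmap
    simpa [Measure.map_apply hpr MeasurableSet.univ, measure_univ] using h
  refine ⟨hprob, hmap, ?_⟩
  have hPR : P ≪ R := withDensity_absolutelyContinuous R f
  have hrn : P.rnDeriv R =ᵐ[R] f := Measure.rnDeriv_withDensity R hfm
  have hrnP : P.rnDeriv R =ᵐ[P] f := hPR.ae_eq hrn
  have hmeas : AEStronglyMeasurable (fun x => Real.log (G x).toReal) (P.map pr) :=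
    ((Real.measurable_log.comp hGm.ennreal_toReal)).aestronglyMeasurable
  have hIntP : Integrable (fun ω => Real.log (f ω).toReal) P := by
    have : Integrable (fun x => Real.log (G x).toReal) (P.map pr) := hmap ▸ hInt
    exact (integrable_map_measure hmeas hpr.aemeasurable).mp this
  have hIntP' : Integrable (fun ω => Real.log (P.rnDeriv R ω).toReal) P :=
    hIntP.congr (hrnP.symm.mono fun ω h => by simp only [h])
  have hval : ∫ ω, Real.log (P.rnDeriv R ω).toReal ∂P
      = ∫ x, Real.log (G x).toReal ∂μ := by
    have h1 : ∫ ω, Real.log (P.rnDeriv R ω).toReal ∂P = ∫ ω, Real.log (f ω).toReal ∂P :=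
      integral_congr_ae (hrnP.mono fun ω h => by simp only [h])
    rw [h1, ← hmap, integral_map hpr.aemeasurable hmeas]
  rw [relEntropy, relEntropy, if_pos ⟨hPR, hIntP'⟩, if_pos ⟨hac, hInt⟩]
  exact congrArg _ hval
end

section
/- Let Ω and E be measurable spaces, R a probability measure on Ω, Π : Ω → E a measurable map, and ν := Π_*R. Let μ be a probability measure on E with μ ≪ ν and H(μ|ν) < ∞, G := dμ/dν, and P* the probability measure on Ω with dP*/dR = G ∘ Π. If P is a probability measure on Ω with Π_*P = μ, P ≪ R, and H(P|R) = H(μ|ν), then P = P*. -/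
open MeasureTheory

open scoped ENNReal

/-- Equality case: if `P ≪ Q` are probability measures and the KL integrand is integrable
with integral `0`, then `P = Q`. -/
lemma kl_eq_zero_iff_eq {Ω : Type*} [MeasurableSpace Ω] (P Q : Measure Ω)
    [IsProbabilityMeasure P] [IsProbabilityMeasure Q] (hPQ : P ≪ Q)
    (hInt : Integrable (fun ω => Real.log (P.rnDeriv Q ω).toReal) P)
    (h0 : ∫ ω, Real.log (P.rnDeriv Q ω).toReal ∂P = 0) : P = Q := by
  set h := Q.rnDeriv P with hh
  have hmeas : Measurable h := Measure.measurable_rnDeriv _ _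
  have hpos : ∀ᵐ ω ∂P, 0 < P.rnDeriv Q ω := Measure.rnDeriv_pos hPQ
  have hfin : ∀ᵐ ω ∂P, P.rnDeriv Q ω < ⊤ := hPQ.ae_le (Measure.rnDeriv_lt_top P Q)
  have hinv : (P.rnDeriv Q)⁻¹ =ᵐ[P] Q.rnDeriv P := Measure.inv_rnDeriv hPQ
  -- h is positive and finite a.e.[P], and log h.toReal = - log (dP/dQ).toReal
  have hgood : ∀ᵐ ω ∂P, 0 < h ω ∧ h ω < ⊤ ∧
      Real.log (h ω).toReal = - Real.log (P.rnDeriv Q ω).toReal := by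
    filter_upwards [hpos, hfin, hinv] with ω h1 h2 h3
    have h3' : h ω = (P.rnDeriv Q ω)⁻¹ := h3.symm
    constructor
    · rw [h3']; exact ENNReal.inv_pos.mpr h2.ne
    constructor
    · rw [h3']; exact ENNReal.inv_lt_top.mpr h1
    · rw [h3', ENNReal.toReal_inv, Real.log_inv]
  -- integrability of h.toReal
  have hLle : ∫⁻ ω, h ω ∂P ≤ 1 := by
    calc ∫⁻ ω, h ω ∂P ≤ Q Set.univ := Measure.lintegral_rnDeriv_le
    _ = 1 := measure_univ
  have hint : Integrable (fun ω => (h ω).toReal) P :=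
    integrable_toReal_of_lintegral_ne_top hmeas.aemeasurable
      (lt_of_le_of_lt hLle ENNReal.one_lt_top).ne
  have hIle : ∫ ω, (h ω).toReal ∂P ≤ 1 := by
    rw [integral_toReal hmeas.aemeasurable (hgood.mono fun ω hω => hω.2.1)]
    calc (∫⁻ ω, h ω ∂P).toReal ≤ (1 : ℝ≥0∞).toReal :=
      ENNReal.toReal_mono ENNReal.one_ne_top hLle
    _ = 1 := by simp
  have hlogint : Integrable (fun ω => Real.log (h ω).toReal) P := by
    refine (integrable_congr ?_).mpr hInt.neg
    filter_upwards [hgood] with ω hω using hω.2.2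
  have hlogzero : ∫ ω, Real.log (h ω).toReal ∂P = 0 := by
    rw [integral_congr_ae (g := fun ω => - Real.log (P.rnDeriv Q ω).toReal)
      (hgood.mono fun ω hω => hω.2.2), integral_neg, h0, neg_zero]
  -- the nonnegative gap function
  set φ : Ω → ℝ := fun ω => (h ω).toReal - 1 - Real.log (h ω).toReal with hφ
  have hφint : Integrable φ P := (hint.sub (integrable_const 1)).sub hlogint
  have hφnn : 0 ≤ᵐ[P] φ := by
    filter_upwards [hgood] with ω hω
    have := Real.log_le_sub_one_of_pos (ENNReal.toReal_pos hω.1.ne' hω.2.1.ne : (0:ℝ) < (h ω).toReal)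
    simp only [hφ, Pi.zero_apply]; linarith
  have hφzero : ∫ ω, φ ω ∂P = 0 := by
    have h1 : ∫ ω, φ ω ∂P = ∫ ω, (h ω).toReal ∂P - 1 := by
      have e1 : ∫ ω, φ ω ∂P
          = (∫ ω, ((h ω).toReal - 1) ∂P) - ∫ ω, Real.log (h ω).toReal ∂P :=
        integral_sub (hint.sub (integrable_const 1)) hlogint
      have e2 : ∫ ω, ((h ω).toReal - 1) ∂P
          = (∫ ω, (h ω).toReal ∂P) - ∫ ω, (1:ℝ) ∂P :=
        integral_sub hint (integrable_const 1)
      rw [e1, e2, hlogzero]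
      simp
    have h2 : 0 ≤ ∫ ω, φ ω ∂P := integral_nonneg_of_ae hφnn
    linarith [hIle]
  have hφae : φ =ᵐ[P] 0 := (integral_eq_zero_iff_of_nonneg_ae hφnn hφint).mp hφzero
  -- conclude h = 1 a.e.[P]
  have hone : h =ᵐ[P] 1 := by
    filter_upwards [hgood, hφae] with ω hω hφω
    have hx : (0:ℝ) < (h ω).toReal := ENNReal.toReal_pos hω.1.ne' hω.2.1.ne
    have hx1 : (h ω).toReal = 1 := by
      by_contra hne
      have := Real.log_lt_sub_one_of_pos hx hne
      simp only [hφ, Pi.zero_apply] at hφω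
      linarith
    have : h ω = ENNReal.ofReal 1 := by
      rw [← ENNReal.ofReal_toReal hω.2.1.ne, hx1]
    simpa using this
  -- Lebesgue decomposition of Q w.r.t. P
  have hdec : Q = Q.singularPart P + P.withDensity h :=
    (Q.haveLebesgueDecomposition_add P)
  have hwd : P.withDensity h = P := by
    rw [withDensity_congr_ae hone, withDensity_one]
  rw [hwd] at hdec
  have hsing : Q.singularPart P = 0 := by
    have h1 := congrArg (fun m : Measure Ω => m Set.univ) hdec
    simp only [Measure.add_apply, measure_univ] at h1
    have h2 : Q.singularPart P Set.univ = 0 := by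
      by_contra hne
      have : (1 : ℝ≥0∞) < Q.singularPart P Set.univ + 1 :=
        ENNReal.lt_add_right ENNReal.one_ne_top (by simpa using hne) |>.trans_eq (add_comm _ _)
      rw [← h1] at this
      exact lt_irrefl _ this
    exact Measure.measure_univ_eq_zero.mp h2
  rw [hsing, zero_add] at hdec
  exact hdec.symm

/-- Uniqueness part of the variational identification theorem: with `ν := Π_* R`,
`G := dμ/dν` and `P* := (G ∘ Π) · R`, any probability measure `P` with `Π_* P = μ`,
`P ≪ R` and `H(P|R) = H(μ|ν)` equals `P*`. -/
theorem reference_based_sbts_uniqueness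
    {Ω E : Type*} [MeasurableSpace Ω] [MeasurableSpace E]
    (R : Measure Ω) [IsProbabilityMeasure R]
    (pr : Ω → E) (hpr : Measurable pr)
    (μ : Measure E) [IsProbabilityMeasure μ]
    (hac : μ ≪ R.map pr)
    (hfin : relEntropy μ (R.map pr) < ⊤)
    (P : Measure Ω) [IsProbabilityMeasure P]
    (hP : P.map pr = μ)
    (hPR : P ≪ R)
    (hopt : relEntropy P R = relEntropy μ (R.map pr)) :
    P = R.withDensity fun ω => μ.rnDeriv (R.map pr) (pr ω) := by
  classical
  set ν := R.map pr with hν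
  set G := μ.rnDeriv ν with hG
  have hGmeas : Measurable G := Measure.measurable_rnDeriv _ _
  have hGpr : Measurable fun ω => G (pr ω) := hGmeas.comp hpr
  set Ps := R.withDensity (fun ω => G (pr ω)) with hPs
  -- extract integrability and integral values from relEntropy hypotheses
  have hμcond : μ ≪ ν ∧ Integrable (fun x => Real.log (μ.rnDeriv ν x).toReal) μ := by
    by_contra hcon
    rw [relEntropy, if_neg hcon] at hfin
    exact lt_irrefl _ hfin
  have hμint : Integrable (fun x => Real.log (G x).toReal) μ := hμcond.2
  have hPcond : P ≪ R ∧ Integrable (fun ω => Real.log (P.rnDeriv R ω).toReal) P := by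
    by_contra hcon
    rw [relEntropy, if_neg hcon] at hopt
    rw [hopt] at hfin
    exact lt_irrefl _ hfin
  have hPint : Integrable (fun ω => Real.log (P.rnDeriv R ω).toReal) P := hPcond.2
  have hint_eq : ∫ ω, Real.log (P.rnDeriv R ω).toReal ∂P
      = ∫ x, Real.log (G x).toReal ∂μ := by
    rw [relEntropy, relEntropy, if_pos hPcond, if_pos hμcond] at hopt
    exact_mod_cast hopt
  -- Ps is a probability measure
  have hPsuniv : Ps Set.univ = 1 := by
    rw [hPs, withDensity_apply _ MeasurableSet.univ, Measure.restrict_univ,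
      ← lintegral_map hGmeas hpr]
    exact (Measure.lintegral_rnDeriv hac).trans measure_univ
  haveI : IsProbabilityMeasure Ps := ⟨hPsuniv⟩
  -- G ∘ pr is positive and finite a.e. [P]
  have hμae : ∀ᵐ x ∂μ, 0 < G x ∧ G x < ⊤ := by
    filter_upwards [Measure.rnDeriv_pos hac, hac.ae_le (Measure.rnDeriv_lt_top μ ν)]
      with x h1 h2 using ⟨h1, h2⟩
  have hPae : ∀ᵐ ω ∂P, 0 < G (pr ω) ∧ G (pr ω) < ⊤ := by
    have h' : ∀ᵐ x ∂(P.map pr), 0 < G x ∧ G x < ⊤ := by rw [hP]; exact hμae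
    exact ae_of_ae_map hpr.aemeasurable h'
  -- P ≪ Ps
  have hPPs : P ≪ Ps := by
    refine Measure.AbsolutelyContinuous.mk fun s hs hs0 => ?_
    rw [hPs, withDensity_apply_eq_zero hGpr] at hs0
    have h1 : P ({ω | G (pr ω) ≠ 0} ∩ s) = 0 := hPR hs0
    have h2 : P {ω | G (pr ω) = 0} = 0 := by
      have hne : ∀ᵐ ω ∂P, G (pr ω) ≠ 0 := hPae.mono fun ω hω => hω.1.ne'
      simpa only [not_not] using ae_iff.mp hne
    refine le_antisymm ?_ zero_le
    calc P s ≤ P (({ω | G (pr ω) ≠ 0} ∩ s) ∪ {ω | G (pr ω) = 0}) := by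
          apply measure_mono; intro ω hω
          by_cases hg : G (pr ω) = 0
          · exact Or.inr hg
          · exact Or.inl ⟨hg, hω⟩
    _ ≤ P ({ω | G (pr ω) ≠ 0} ∩ s) + P {ω | G (pr ω) = 0} := measure_union_le _ _
    _ = 0 := by rw [h1, h2, add_zero]
  -- rnDeriv of Ps w.r.t. R
  have hPsR : Ps.rnDeriv R =ᵐ[R] fun ω => G (pr ω) := Measure.rnDeriv_withDensity R hGpr
  -- chain rule
  have hchain : P.rnDeriv Ps * Ps.rnDeriv R =ᵐ[R] P.rnDeriv R :=
    Measure.rnDeriv_mul_rnDeriv hPPs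
  -- good a.e.[P] properties of rnDeriv P Ps
  have hdpos : ∀ᵐ ω ∂P, 0 < P.rnDeriv Ps ω := Measure.rnDeriv_pos hPPs
  have hdfin : ∀ᵐ ω ∂P, P.rnDeriv Ps ω < ⊤ := hPPs.ae_le (Measure.rnDeriv_lt_top P Ps)
  -- log decomposition a.e.[P]
  have hlogdec : (fun ω => Real.log (P.rnDeriv R ω).toReal)
      =ᵐ[P] fun ω => Real.log (P.rnDeriv Ps ω).toReal + Real.log (G (pr ω)).toReal := by
    filter_upwards [hPR.ae_le hchain, hPR.ae_le hPsR, hdpos, hdfin, hPae]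
      with ω hc hg hp hf hGω
    rw [← hc, Pi.mul_apply, hg, ENNReal.toReal_mul]
    exact Real.log_mul (ENNReal.toReal_pos hp.ne' hf.ne).ne'
      (ENNReal.toReal_pos hGω.1.ne' hGω.2.ne).ne'
  -- integrability and integral of log G ∘ pr over P
  have hGsm : AEStronglyMeasurable (fun x => Real.log (G x).toReal) (P.map pr) := by
    exact ((Real.measurable_log.comp (hGmeas.ennreal_toReal)).aestronglyMeasurable)
  have hGPint : Integrable (fun ω => Real.log (G (pr ω)).toReal) P := by
    have := (integrable_map_measure hGsm hpr.aemeasurable).mp (by rw [hP]; exact hμint)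
    exact this
  have hGPeq : ∫ ω, Real.log (G (pr ω)).toReal ∂P = ∫ x, Real.log (G x).toReal ∂μ := by
    rw [← hP, integral_map hpr.aemeasurable hGsm]
  -- integrability and zero integral of llr P Ps
  have hDint : Integrable (fun ω => Real.log (P.rnDeriv Ps ω).toReal) P := by
    refine (integrable_congr ?_).mp (hPint.sub hGPint)
    filter_upwards [hlogdec] with ω hω
    simp only [Pi.sub_apply, hω]; ring
  have hDzero : ∫ ω, Real.log (P.rnDeriv Ps ω).toReal ∂P = 0 := by
    have e1 : ∫ ω, Real.log (P.rnDeriv R ω).toReal ∂P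
        = ∫ ω, (Real.log (P.rnDeriv Ps ω).toReal + Real.log (G (pr ω)).toReal) ∂P :=
      integral_congr_ae hlogdec
    rw [integral_add hDint hGPint] at e1
    rw [hint_eq, hGPeq] at e1
    linarith
  exact kl_eq_zero_iff_eq P Ps hPPs hDint hDzero
end

section
/- Let (U, d) be a pseudometric space equipped with its Borel σ-algebra, μ a finite Borel measure on U, and u₀ ∈ U. Suppose there exist r₀ > 0, c > 0 and q > 0 such that μ(B(u₀, r)) ≥ c r^q for all r ∈ (0, r₀), where B(u₀, r) := {v : d(u₀, v) < r}. For h > 0 define D_h := ∫ exp(−d(u₀, v)²/(2h²)) μ(dv). Then: (i) there exist C > 0 and h₀ > 0 with D_h ≥ C h^q for all h ∈ (0, h₀); (ii) for every ρ > 0, the ratio (∫_{{v : d(u₀,v) > ρ}} exp(−d(u₀,v)²/(2h²)) μ(dv)) / D_h tends to 0 as h → 0⁺. -/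
open MeasureTheory Filter

/-- Kernel-denominator lemma: under the small-ball lower-mass condition
`μ(B(u₀,r)) ≥ c r^q`, the Gaussian kernel denominator
`D_h = ∫ exp(−d(u₀,v)²/(2h²)) dμ` satisfies `D_h ≥ C h^q` for small `h`, and the
normalised kernel mass outside every ball `{d(u₀,·) > ρ}` vanishes as `h → 0⁺`. -/
theorem kernel_denominator_small_ball
    {U : Type*} [PseudoMetricSpace U] [MeasurableSpace U] [OpensMeasurableSpace U]
    (μ : Measure U) [IsFiniteMeasure μ] (u₀ : U)
    (r₀ c q : ℝ) (hr₀ : 0 < r₀) (hc : 0 < c) (hq : 0 < q)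
    (hball : ∀ r : ℝ, 0 < r → r < r₀ →
      ENNReal.ofReal (c * r ^ q) ≤ μ (Metric.ball u₀ r))
    (D : ℝ → ℝ)
    (hD : ∀ h : ℝ, D h = ∫ v, Real.exp (-(dist u₀ v) ^ 2 / (2 * h ^ 2)) ∂μ) :
    (∃ C > (0 : ℝ), ∃ h₀ > (0 : ℝ), ∀ h : ℝ, 0 < h → h < h₀ → C * h ^ q ≤ D h) ∧
    (∀ ρ > (0 : ℝ), Tendsto
      (fun h : ℝ =>
        (∫ v in {v | ρ < dist u₀ v}, Real.exp (-(dist u₀ v) ^ 2 / (2 * h ^ 2)) ∂μ) / D h)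
      (nhdsWithin 0 (Set.Ioi 0)) (nhds 0)) := by
  set C : ℝ := Real.exp (-2⁻¹) * c with hC
  have hCpos : 0 < C := mul_pos (Real.exp_pos _) hc
  -- continuity / integrability of the kernel
  have hcont : ∀ h : ℝ, Continuous (fun v : U => Real.exp (-(dist u₀ v) ^ 2 / (2 * h ^ 2))) := by
    intro h
    exact Real.continuous_exp.comp (((continuous_const.dist continuous_id).pow 2).neg.div_const _)
  have hnonneg : ∀ (h : ℝ) (v : U), 0 ≤ Real.exp (-(dist u₀ v) ^ 2 / (2 * h ^ 2)) :=
    fun h v => (Real.exp_pos _).le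
  have hle_one : ∀ (h : ℝ) (v : U), Real.exp (-(dist u₀ v) ^ 2 / (2 * h ^ 2)) ≤ 1 := by
    intro h v
    rw [show (1 : ℝ) = Real.exp 0 by simp]
    exact Real.exp_le_exp.2
      (div_nonpos_of_nonpos_of_nonneg (neg_nonpos.2 (sq_nonneg _)) (by positivity))
  have hint : ∀ h : ℝ, Integrable (fun v : U => Real.exp (-(dist u₀ v) ^ 2 / (2 * h ^ 2))) μ := by
    intro h
    refine (integrable_const (1 : ℝ)).mono' ((hcont h).aestronglyMeasurable) ?_
    filter_upwards with v
    rw [Real.norm_eq_abs, abs_of_nonneg (hnonneg h v)]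
    exact hle_one h v
  -- Part (i)
  have main : ∀ h : ℝ, 0 < h → h < r₀ → C * h ^ q ≤ D h := by
    intro h hh hhr
    have hball' : c * h ^ q ≤ (μ (Metric.ball u₀ h)).toReal := by
      rw [← ENNReal.ofReal_le_iff_le_toReal (measure_ne_top μ _)]
      exact hball h hh hhr
    have hlow : ∀ v ∈ Metric.ball u₀ h,
        Real.exp (-2⁻¹) ≤ Real.exp (-(dist u₀ v) ^ 2 / (2 * h ^ 2)) := by
      intro v hv
      rw [Metric.mem_ball, dist_comm] at hv
      refine Real.exp_le_exp.2 ?_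
      rw [show (-2⁻¹ : ℝ) = -1 / 2 by norm_num,
        div_le_div_iff₀ (by norm_num) (by positivity : (0:ℝ) < 2 * h ^ 2)]
      have : (dist u₀ v) ^ 2 ≤ h ^ 2 := by
        apply sq_le_sq' (by linarith [dist_nonneg (x := u₀) (y := v)]) hv.le
      linarith
    calc C * h ^ q ≤ Real.exp (-2⁻¹) * (μ (Metric.ball u₀ h)).toReal := by
          rw [hC, mul_assoc]
          exact mul_le_mul_of_nonneg_left hball' (Real.exp_pos _).le
      _ ≤ ∫ v in Metric.ball u₀ h, Real.exp (-(dist u₀ v) ^ 2 / (2 * h ^ 2)) ∂μ :=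
          setIntegral_ge_of_const_le_real Metric.isOpen_ball.measurableSet (measure_ne_top μ _)
            hlow ((hint h).integrableOn)
      _ ≤ D h := by
          rw [hD h]
          exact setIntegral_le_integral (hint h) (Filter.Eventually.of_forall (hnonneg h))
  refine ⟨⟨C, hCpos, r₀, hr₀, main⟩, ?_⟩
  -- Part (ii)
  intro ρ hρ
  set M : ℝ := (μ Set.univ).toReal with hM
  have hMnn : 0 ≤ M := ENNReal.toReal_nonneg
  have hSmeas : MeasurableSet {v : U | ρ < dist u₀ v} :=
    (isOpen_lt continuous_const (continuous_const.dist continuous_id)).measurableSet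
  -- the dominating function
  have hg : Tendsto (fun h : ℝ => (Real.exp (-ρ ^ 2 / (2 * h ^ 2)) * M) / (C * h ^ q))
      (nhdsWithin 0 (Set.Ioi 0)) (nhds 0) := by
    have hφ : Tendsto (fun h : ℝ => (h ^ 2)⁻¹) (nhdsWithin 0 (Set.Ioi 0)) atTop := by
      refine tendsto_inv_nhdsGT_zero.comp ?_
      refine tendsto_nhdsWithin_of_tendsto_nhds_of_eventually_within _ ?_ ?_
      · have : Tendsto (fun h : ℝ => h ^ 2) (nhdsWithin 0 (Set.Ioi 0)) (nhds (0 ^ 2)) :=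
          ((continuous_pow 2).tendsto 0).comp nhdsWithin_le_nhds
        simpa using this
      · filter_upwards [self_mem_nhdsWithin] with h (hh : 0 < h)
        exact Set.mem_Ioi.2 (by positivity)
    have hkey := (tendsto_rpow_mul_exp_neg_mul_atTop_nhds_zero (q / 2) (ρ ^ 2 / 2)
      (by positivity)).comp hφ
    have := (hkey.const_mul (M / C))
    rw [mul_zero] at this
    refine this.congr' ?_
    filter_upwards [self_mem_nhdsWithin] with h (hh : 0 < h)
    have h1 : ((h ^ 2)⁻¹) ^ (q / 2) = (h ^ q)⁻¹ := by
      rw [← Real.rpow_natCast h 2, ← Real.rpow_neg_one (h ^ ((2:ℕ):ℝ)), ← Real.rpow_mul hh.le,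
        ← Real.rpow_mul hh.le, ← Real.rpow_neg_one (h ^ q), ← Real.rpow_mul hh.le]
      norm_num
      congr 1
      ring
    have h2 : -(ρ ^ 2 / 2) * (h ^ 2)⁻¹ = -ρ ^ 2 / (2 * h ^ 2) := by
      field_simp
    simp only [Function.comp]
    rw [h1, h2]
    field_simp
  refine squeeze_zero' ?_ ?_ hg
  · filter_upwards [Ioo_mem_nhdsGT_of_mem (by constructor <;> simp [hr₀] : (0:ℝ) ∈ Set.Ico 0 r₀)]
      with h hh
    have hDpos : 0 < D h :=
      lt_of_lt_of_le (mul_pos hCpos (Real.rpow_pos_of_pos hh.1 q)) (main h hh.1 hh.2)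
    exact div_nonneg (setIntegral_nonneg hSmeas (fun v _ => hnonneg h v)) hDpos.le
  · filter_upwards [Ioo_mem_nhdsGT_of_mem (by constructor <;> simp [hr₀] : (0:ℝ) ∈ Set.Ico 0 r₀)]
      with h hh
    have hnum : (∫ v in {v | ρ < dist u₀ v}, Real.exp (-(dist u₀ v) ^ 2 / (2 * h ^ 2)) ∂μ)
        ≤ Real.exp (-ρ ^ 2 / (2 * h ^ 2)) * M := by
      calc (∫ v in {v | ρ < dist u₀ v}, Real.exp (-(dist u₀ v) ^ 2 / (2 * h ^ 2)) ∂μ)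
          ≤ ∫ _ in {v | ρ < dist u₀ v}, Real.exp (-ρ ^ 2 / (2 * h ^ 2)) ∂μ := by
            refine setIntegral_mono_on ((hint h).integrableOn)
              (integrableOn_const (measure_ne_top μ _)) hSmeas ?_
            intro v hv
            refine Real.exp_le_exp.2 (div_le_div_of_nonneg_right ?_ (by positivity))
            have : ρ ^ 2 ≤ (dist u₀ v) ^ 2 :=
              pow_le_pow_left₀ hρ.le (le_of_lt hv) 2
            linarith
        _ = Real.exp (-ρ ^ 2 / (2 * h ^ 2)) * (μ {v | ρ < dist u₀ v}).toReal := by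
            simp [Measure.restrict_apply_univ, mul_comm, measureReal_def]
        _ ≤ Real.exp (-ρ ^ 2 / (2 * h ^ 2)) * M := by
            refine mul_le_mul_of_nonneg_left ?_ (Real.exp_pos _).le
            exact ENNReal.toReal_mono (measure_ne_top μ _) (measure_mono (Set.subset_univ _))
    have hDl : C * h ^ q ≤ D h := main h hh.1 hh.2
    have hnn : 0 ≤ (∫ v in {v | ρ < dist u₀ v}, Real.exp (-(dist u₀ v) ^ 2 / (2 * h ^ 2)) ∂μ) :=
      setIntegral_nonneg hSmeas (fun v _ => hnonneg h v)
    exact div_le_div₀ (by positivity) hnum (mul_pos hCpos (Real.rpow_pos_of_pos hh.1 q)) hDl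
end

section
/- Let (X_m)_{m≥1} be i.i.d. random vectors in ℝ^q whose common law has a density π with respect to Lebesgue measure, with π continuous at x₀. For each M ≥ 1 let K_M : ℝ^q → [0, B] be measurable with ∫ K_M(u) du = 1 and supp K_M ⊆ {|u| ≤ R_M}, where B < ∞ is a uniform bound. Let h_M > 0 satisfy h_M → 0, h_M R_M → 0, and the strong bandwidth condition M h_M^q / log M → ∞. Then the kernel density estimator (1/M) Σ_{m=1}^M h_M^{-q} K_M((x₀ − X_m)/h_M) converges to π(x₀) almost surely as M → ∞. -/
open MeasureTheory ProbabilityTheory Filter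
open scoped ENNReal NNReal

lemma exp_le_quad {x : ℝ} (hx : |x| ≤ 1) : Real.exp x ≤ 1 + x + x ^ 2 := by
  have h := Real.exp_bound hx (n := 2) (by norm_num)
  have h2 : ∑ m ∈ Finset.range 2, x ^ m / m.factorial = 1 + x := by
    simp [Finset.sum_range_succ]
  rw [h2] at h
  have h3 := (abs_sub_le_iff.1 h).1
  norm_num at h3
  have h4 : |x| ^ 2 = x ^ 2 := sq_abs x
  nlinarith [sq_nonneg x]

lemma mgf_bound {Ω : Type*} [MeasurableSpace Ω] {P : Measure Ω} [IsProbabilityMeasure P]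
    {Y : Ω → ℝ} (hY : Measurable Y)
    {B : ℝ} (hB : 0 < B) (h0 : ∀ ω, 0 ≤ Y ω) (h1 : ∀ ω, Y ω ≤ B)
    {t : ℝ} (ht : |t| ≤ 1 / B) :
    mgf Y P t ≤ Real.exp (t * (∫ ω, Y ω ∂P) + t ^ 2 * B * (∫ ω, Y ω ∂P)) := by
  have hYint : Integrable Y P := by
    refine Integrable.mono' (integrable_const B) hY.aestronglyMeasurable ?_
    filter_upwards with ω
    rw [Real.norm_eq_abs, abs_of_nonneg (h0 ω)]; exact h1 ω
  have hY2int : Integrable (fun ω => Y ω ^ 2) P := by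
    refine Integrable.mono' (integrable_const (B ^ 2)) (hY.pow_const 2).aestronglyMeasurable ?_
    filter_upwards with ω
    rw [Real.norm_eq_abs, abs_of_nonneg (sq_nonneg _)]
    exact pow_le_pow_left₀ (h0 ω) (h1 ω) 2
  have hexpint : Integrable (fun ω => Real.exp (t * Y ω)) P := by
    refine Integrable.mono' (integrable_const (Real.exp (|t| * B)))
      ((hY.const_mul t).exp).aestronglyMeasurable ?_
    filter_upwards with ω
    rw [Real.norm_eq_abs, Real.abs_exp]
    refine Real.exp_le_exp.2 ?_
    calc t * Y ω ≤ |t * Y ω| := le_abs_self _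
    _ = |t| * |Y ω| := abs_mul _ _
    _ ≤ |t| * B := by
        refine mul_le_mul_of_nonneg_left ?_ (abs_nonneg t)
        rw [abs_of_nonneg (h0 ω)]; exact h1 ω
  have hptwise : ∀ ω, Real.exp (t * Y ω) ≤ 1 + t * Y ω + t ^ 2 * Y ω ^ 2 := by
    intro ω
    have habs : |t * Y ω| ≤ 1 := by
      rw [abs_mul]
      calc |t| * |Y ω| ≤ (1 / B) * B := by
            refine mul_le_mul ht ?_ (abs_nonneg _) (by positivity)
            rw [abs_of_nonneg (h0 ω)]; exact h1 ω
      _ = 1 := by field_simp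
    have := exp_le_quad habs
    calc Real.exp (t * Y ω) ≤ 1 + t * Y ω + (t * Y ω) ^ 2 := this
    _ = 1 + t * Y ω + t ^ 2 * Y ω ^ 2 := by ring
  set μ := ∫ ω, Y ω ∂P with hμdef
  have hμ0 : 0 ≤ μ := integral_nonneg h0
  have hY2μ : ∫ ω, Y ω ^ 2 ∂P ≤ B * μ := by
    rw [hμdef, ← integral_const_mul]
    refine integral_mono hY2int (hYint.const_mul B) ?_
    intro ω
    show Y ω ^ 2 ≤ B * Y ω
    nlinarith [h0 ω, h1 ω]
  have step1 : mgf Y P t ≤ 1 + t * μ + t ^ 2 * (∫ ω, Y ω ^ 2 ∂P) := by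
    rw [mgf]
    calc ∫ ω, Real.exp (t * Y ω) ∂P ≤ ∫ ω, (1 + t * Y ω + t ^ 2 * Y ω ^ 2) ∂P := by
          refine integral_mono hexpint ?_ hptwise
          exact ((integrable_const 1).add (hYint.const_mul t)).add (hY2int.const_mul (t ^ 2))
    _ = 1 + t * μ + t ^ 2 * (∫ ω, Y ω ^ 2 ∂P) := by
          have e1 : ∫ ω, (1 + t * Y ω + t ^ 2 * Y ω ^ 2) ∂P
              = (∫ ω, (1 + t * Y ω) ∂P) + ∫ ω, t ^ 2 * Y ω ^ 2 ∂P :=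
            integral_add ((integrable_const 1).add (hYint.const_mul t)) (hY2int.const_mul _)
          have e2 : ∫ ω, (1 + t * Y ω) ∂P = (∫ (_ : Ω), (1:ℝ) ∂P) + ∫ ω, t * Y ω ∂P :=
            integral_add (integrable_const 1) (hYint.const_mul t)
          rw [e1, e2, integral_const, integral_const_mul, integral_const_mul]
          simp [hμdef]
  calc mgf Y P t ≤ 1 + t * μ + t ^ 2 * (∫ ω, Y ω ^ 2 ∂P) := step1
  _ ≤ 1 + (t * μ + t ^ 2 * B * μ) := by
      have : t ^ 2 * (∫ ω, Y ω ^ 2 ∂P) ≤ t ^ 2 * (B * μ) :=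
        mul_le_mul_of_nonneg_left hY2μ (sq_nonneg t)
      nlinarith
  _ ≤ Real.exp (t * μ + t ^ 2 * B * μ) := by
      have := Real.add_one_le_exp (t * μ + t ^ 2 * B * μ)
      linarith
lemma tail_bound {Ω : Type*} [MeasurableSpace Ω] {P : Measure Ω} [IsProbabilityMeasure P]
    {Y : ℕ → Ω → ℝ} (hmeas : ∀ m, Measurable (Y m))
    (hindep : iIndepFun Y P)
    {B : ℝ} (hB : 0 < B) (h0 : ∀ m ω, 0 ≤ Y m ω) (h1 : ∀ m ω, Y m ω ≤ B)
    {μ : ℝ} (hμ : ∀ m, ∫ ω, Y m ω ∂P = μ)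
    (M : ℕ) {t : ℝ} (ht0 : 0 ≤ t) (ht : t ≤ 1 / B) (s : ℝ) :
    (P {ω | (M : ℝ) * μ + s ≤ ∑ m ∈ Finset.range M, Y m ω}).toReal +
    (P {ω | ∑ m ∈ Finset.range M, Y m ω ≤ (M : ℝ) * μ - s}).toReal
      ≤ 2 * Real.exp (-(t * s) + M * (t ^ 2 * B * μ)) := by
  have habs : |t| ≤ 1 / B := by rwa [abs_of_nonneg ht0]
  have habs' : |(-t)| ≤ 1 / B := by rwa [abs_neg, abs_of_nonneg ht0]
  set S : Ω → ℝ := ∑ m ∈ Finset.range M, Y m with hSdef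
  have hSapp : ∀ ω, S ω = ∑ m ∈ Finset.range M, Y m ω := fun ω => Finset.sum_apply ω _ _
  have hS_meas : Measurable S := by
    have : Measurable fun ω => ∑ m ∈ Finset.range M, Y m ω :=
      Finset.measurable_sum _ fun m _ => hmeas m
    convert this using 1
    ext ω; rw [hSapp]
  have hSbd : ∀ ω, |S ω| ≤ M * B := by
    intro ω
    rw [hSapp, abs_of_nonneg (Finset.sum_nonneg fun m _ => h0 m ω)]
    calc ∑ m ∈ Finset.range M, Y m ω ≤ ∑ m ∈ Finset.range M, B :=
          Finset.sum_le_sum fun m _ => h1 m ω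
    _ = M * B := by simp [mul_comm]
  have hint : ∀ u : ℝ, Integrable (fun ω => Real.exp (u * S ω)) P := by
    intro u
    refine Integrable.mono' (integrable_const (Real.exp (|u| * (M * B))))
      ((hS_meas.const_mul u).exp).aestronglyMeasurable ?_
    filter_upwards with ω
    rw [Real.norm_eq_abs, Real.abs_exp]
    refine Real.exp_le_exp.2 ?_
    calc u * S ω ≤ |u * S ω| := le_abs_self _
    _ = |u| * |S ω| := abs_mul _ _
    _ ≤ |u| * (M * B) := mul_le_mul_of_nonneg_left (hSbd ω) (abs_nonneg u)
  have hmgf : ∀ u : ℝ, |u| ≤ 1 / B →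
      mgf S P u ≤ Real.exp (M * (u * μ + u ^ 2 * B * μ)) := by
    intro u hu
    rw [hSdef, hindep.mgf_sum hmeas]
    calc ∏ m ∈ Finset.range M, mgf (Y m) P u
        ≤ ∏ m ∈ Finset.range M, Real.exp (u * μ + u ^ 2 * B * μ) := by
          refine Finset.prod_le_prod (fun m _ => mgf_nonneg) fun m _ => ?_
          have := mgf_bound (P := P) (hmeas m) hB (h0 m) (h1 m) hu
          rwa [hμ m] at this
    _ = Real.exp (M * (u * μ + u ^ 2 * B * μ)) := by
          rw [Finset.prod_const, ← Real.exp_nat_mul]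
          simp
  have upper : (P {ω | (M : ℝ) * μ + s ≤ S ω}).toReal
      ≤ Real.exp (-(t * s) + M * (t ^ 2 * B * μ)) := by
    calc (P {ω | (M : ℝ) * μ + s ≤ S ω}).toReal
        ≤ Real.exp (-t * ((M : ℝ) * μ + s)) * mgf S P t :=
          measure_ge_le_exp_mul_mgf _ ht0 (hint t)
    _ ≤ Real.exp (-t * ((M : ℝ) * μ + s)) * Real.exp (M * (t * μ + t ^ 2 * B * μ)) :=
          mul_le_mul_of_nonneg_left (hmgf t habs) (Real.exp_nonneg _)
    _ = Real.exp (-(t * s) + M * (t ^ 2 * B * μ)) := by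
          rw [← Real.exp_add]; ring_nf
  have lower : (P {ω | S ω ≤ (M : ℝ) * μ - s}).toReal
      ≤ Real.exp (-(t * s) + M * (t ^ 2 * B * μ)) := by
    calc (P {ω | S ω ≤ (M : ℝ) * μ - s}).toReal
        ≤ Real.exp (-(-t) * ((M : ℝ) * μ - s)) * mgf S P (-t) :=
          measure_le_le_exp_mul_mgf _ (neg_nonpos.2 ht0) (hint (-t))
    _ ≤ Real.exp (-(-t) * ((M : ℝ) * μ - s)) * Real.exp (M * ((-t) * μ + (-t) ^ 2 * B * μ)) :=
          mul_le_mul_of_nonneg_left (hmgf (-t) habs') (Real.exp_nonneg _)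
    _ = Real.exp (-(t * s) + M * (t ^ 2 * B * μ)) := by
          rw [← Real.exp_add]; ring_nf
  have e1 : {ω | (M : ℝ) * μ + s ≤ ∑ m ∈ Finset.range M, Y m ω}
      = {ω | (M : ℝ) * μ + s ≤ S ω} := by ext ω; simp [hSapp]
  have e2 : {ω | ∑ m ∈ Finset.range M, Y m ω ≤ (M : ℝ) * μ - s}
      = {ω | S ω ≤ (M : ℝ) * μ - s} := by ext ω; simp [hSapp]
  rw [e1, e2]
  linarith
lemma change_of_var {q : ℕ} (π : (Fin q → ℝ) → ℝ) (K' : (Fin q → ℝ) → ℝ)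
    (x₀ : Fin q → ℝ) {c : ℝ} (hc : 0 < c) :
    ∫ x, π x * K' (c⁻¹ • (x₀ - x)) = c ^ q * ∫ u, K' u * π (x₀ - c • u) := by
  set G : (Fin q → ℝ) → ℝ := fun u => K' u * π (x₀ - c • u) with hGdef
  have step1 : (fun x => π x * K' (c⁻¹ • (x₀ - x))) = fun x => G (c⁻¹ • (x₀ - x)) := by
    ext x
    simp only [hGdef]
    rw [smul_inv_smul₀ hc.ne', sub_sub_cancel, mul_comm]
  have step2 : ∫ x, G (c⁻¹ • (x₀ - x)) = ∫ y, G (c⁻¹ • y) :=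
    integral_sub_left_eq_self (fun y => G (c⁻¹ • y)) volume x₀
  have step3 : ∫ y, G (c⁻¹ • y) = c ^ q * ∫ u, G u := by
    have := Measure.integral_comp_inv_smul_of_nonneg (volume : Measure (Fin q → ℝ)) G hc.le
    rwa [Module.finrank_fin_fun, smul_eq_mul] at this
  rw [step1, step2, step3]

lemma kernel_integrable {q : ℕ} {K' : (Fin q → ℝ) → ℝ} (hK1 : ∫ u, K' u = 1) :
    Integrable K' (volume : Measure (Fin q → ℝ)) := by
  by_contra hcon
  rw [integral_undef hcon] at hK1
  norm_num at hK1

lemma bias_tendsto {q : ℕ} (π : (Fin q → ℝ) → ℝ) (hπ_meas : Measurable π) (hπ_nonneg : 0 ≤ π)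
    (x₀ : Fin q → ℝ) (hπ_cont : ContinuousAt π x₀)
    (K : ℕ → (Fin q → ℝ) → ℝ) (R : ℕ → ℝ)
    (hK_meas : ∀ M, Measurable (K M))
    (hK_nonneg : ∀ M u, 0 ≤ K M u)
    (hK_int : ∀ M, ∫ u, K M u = 1)
    (hK_supp : ∀ M u, R M < ‖u‖ → K M u = 0)
    (h : ℕ → ℝ) (hh_pos : ∀ M, 0 < h M)
    (hhR : Tendsto (fun M => h M * R M) atTop (nhds 0)) :
    Tendsto (fun M => ∫ u, K M u * π (x₀ - h M • u)) atTop (nhds (π x₀)) := by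
  rw [Metric.tendsto_atTop]
  intro ε hε
  obtain ⟨δ, hδ, hδ'⟩ := Metric.continuousAt_iff.1 hπ_cont (ε / 2) (by linarith)
  obtain ⟨N, hN⟩ := eventually_atTop.1 (hhR.eventually (gt_mem_nhds hδ) :
    ∀ᶠ M in atTop, h M * R M < δ)
  refine ⟨N, fun M hM => ?_⟩
  have hKint : Integrable (K M) := kernel_integrable (hK_int M)
  -- key pointwise estimates on the support
  have hkey : ∀ u, K M u ≠ 0 → dist (π (x₀ - h M • u)) (π x₀) < ε / 2 := by
    intro u hu
    refine hδ' ?_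
    have hub : ‖u‖ ≤ R M := by
      by_contra hcon
      exact hu (hK_supp M u (by linarith [not_le.1 hcon]))
    have : dist (x₀ - h M • u) x₀ = h M * ‖u‖ := by
      rw [dist_eq_norm, sub_sub_cancel_left, norm_neg, norm_smul, Real.norm_eq_abs,
        abs_of_nonneg (hh_pos M).le]
    rw [this]
    calc h M * ‖u‖ ≤ h M * R M := mul_le_mul_of_nonneg_left hub (hh_pos M).le
    _ < δ := hN M hM
  have hbd : ∀ u, K M u * π (x₀ - h M • u) ≤ K M u * (π x₀ + ε / 2) := by
    intro u
    rcases eq_or_ne (K M u) 0 with h0 | h0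
    · simp [h0]
    · refine mul_le_mul_of_nonneg_left ?_ (hK_nonneg M u)
      have := hkey u h0
      rw [Real.dist_eq] at this
      linarith [abs_lt.1 this]
  have hmeas1 : Measurable fun u => K M u * π (x₀ - h M • u) :=
    (hK_meas M).mul (hπ_meas.comp (measurable_const.sub (measurable_id.const_smul (h M))))
  have hint1 : Integrable (fun u => K M u * π (x₀ - h M • u)) := by
    refine Integrable.mono' (hKint.mul_const (π x₀ + ε / 2)) hmeas1.aestronglyMeasurable ?_
    filter_upwards with u
    rw [Real.norm_eq_abs, abs_of_nonneg (mul_nonneg (hK_nonneg M u) (hπ_nonneg _))]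
    calc K M u * π (x₀ - h M • u) ≤ K M u * (π x₀ + ε / 2) := hbd u
    _ = (fun u => K M u * (π x₀ + ε / 2)) u := rfl
  have hint2 : Integrable (fun u => K M u * π x₀) := hKint.mul_const _
  have hdiff : (∫ u, K M u * π (x₀ - h M • u)) - π x₀
      = ∫ u, (K M u * π (x₀ - h M • u) - K M u * π x₀) := by
    rw [integral_sub hint1 hint2, integral_mul_const, hK_int M, one_mul]
  rw [Real.dist_eq, hdiff]
  have habs : ∀ u, |K M u * π (x₀ - h M • u) - K M u * π x₀| ≤ K M u * (ε / 2) := by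
    intro u
    rcases eq_or_ne (K M u) 0 with h0 | h0
    · simp [h0]
    · rw [← mul_sub, abs_mul, abs_of_nonneg (hK_nonneg M u)]
      refine mul_le_mul_of_nonneg_left ?_ (hK_nonneg M u)
      have := hkey u h0
      rw [Real.dist_eq] at this
      exact this.le
  calc |∫ u, (K M u * π (x₀ - h M • u) - K M u * π x₀)|
      ≤ ∫ u, |K M u * π (x₀ - h M • u) - K M u * π x₀| := by
        simpa [Real.norm_eq_abs] using
          norm_integral_le_integral_norm (fun u => K M u * π (x₀ - h M • u) - K M u * π x₀)
  _ ≤ ∫ u, K M u * (ε / 2) := by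
        refine integral_mono (hint1.sub hint2).abs (hKint.mul_const _) habs
  _ = ε / 2 := by rw [integral_mul_const, hK_int M, one_mul]
  _ < ε := by linarith

/-- Almost-sure kernel density estimation under the strong bandwidth condition: for i.i.d.
samples with common density `π` continuous at `x₀`, uniformly bounded compactly supported
kernel profiles with unit integral and support radius `R_M`, and bandwidths `h_M → 0` with
`h_M R_M → 0` and `M h_M^q / log M → ∞`, the kernel density estimator converges to
`π(x₀)` almost surely. -/
theorem kde_consistency_almost_surely
    {Ω : Type*} [MeasurableSpace Ω] (P : Measure Ω) [IsProbabilityMeasure P]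
    {q : ℕ} (X : ℕ → Ω → (Fin q → ℝ))
    (hX_meas : ∀ m, Measurable (X m))
    (hX_indep : iIndepFun X P)
    (π : (Fin q → ℝ) → ℝ) (hπ_meas : Measurable π) (hπ_nonneg : 0 ≤ π)
    (hX_law : ∀ m, P.map (X m) = volume.withDensity fun x => ENNReal.ofReal (π x))
    (x₀ : Fin q → ℝ) (hπ_cont : ContinuousAt π x₀)
    (B : ℝ) (K : ℕ → (Fin q → ℝ) → ℝ) (R : ℕ → ℝ)
    (hK_meas : ∀ M, Measurable (K M))
    (hK_nonneg : ∀ M u, 0 ≤ K M u) (hK_bdd : ∀ M u, K M u ≤ B)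
    (hK_int : ∀ M, ∫ u, K M u = 1)
    (hK_supp : ∀ M u, R M < ‖u‖ → K M u = 0)
    (h : ℕ → ℝ) (hh_pos : ∀ M, 0 < h M)
    (hh0 : Tendsto h atTop (nhds 0))
    (hhR : Tendsto (fun M => h M * R M) atTop (nhds 0))
    (hMh_strong : Tendsto (fun M : ℕ => (M : ℝ) * h M ^ q / Real.log M) atTop atTop) :
    ∀ᵐ ω ∂P, Tendsto
      (fun M : ℕ => ((M : ℝ) * h M ^ q)⁻¹ *
        ∑ m ∈ Finset.range M, K M ((h M)⁻¹ • (x₀ - X m ω)))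
      atTop (nhds (π x₀)) := by
  -- B is positive
  have hB : 0 < B := by
    by_contra hcon
    push_neg at hcon
    have hK0 : ∀ u, K 0 u = 0 := fun u =>
      le_antisymm ((hK_bdd 0 u).trans hcon) (hK_nonneg 0 u)
    have := hK_int 0
    simp only [hK0, integral_zero] at this
    norm_num at this
  -- the rescaled kernel applied to the data
  set g : ℕ → (Fin q → ℝ) → ℝ := fun M x => K M ((h M)⁻¹ • (x₀ - x)) with hgdef
  have hg_meas : ∀ M, Measurable (g M) := fun M =>
    (hK_meas M).comp ((measurable_const.sub measurable_id).const_smul ((h M)⁻¹))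
  -- the mean of a single rescaled kernel evaluation
  have hmean : ∀ M m, ∫ ω, g M (X m ω) ∂P = ∫ x, π x * g M x := by
    intro M m
    rw [← integral_map (hX_meas m).aemeasurable (hg_meas M).aestronglyMeasurable, hX_law m]
    have hd : (fun x => ENNReal.ofReal (π x)) = fun x => ((π x).toNNReal : ℝ≥0∞) := rfl
    rw [hd, integral_withDensity_eq_integral_smul (f := fun x => (π x).toNNReal)
      (by exact measurable_real_toNNReal.comp hπ_meas) (g M)]
    congr 1
    ext x
    rw [NNReal.smul_def, smul_eq_mul, Real.coe_toNNReal _ (hπ_nonneg x)]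
  -- the rescaled bias integral
  set J : ℕ → ℝ := fun M => ∫ u, K M u * π (x₀ - h M • u) with hJdef
  have hCV : ∀ M, ∫ x, π x * g M x = h M ^ q * J M := fun M =>
    change_of_var π (K M) x₀ (hh_pos M)
  have hJ : Tendsto J atTop (nhds (π x₀)) :=
    bias_tendsto π hπ_meas hπ_nonneg x₀ hπ_cont K R hK_meas hK_nonneg hK_int hK_supp h
      hh_pos hhR
  -- the key concentration step
  have key : ∀ ε : ℝ, 0 < ε → ∀ᵐ ω ∂P, ∀ᶠ M : ℕ in atTop,
      |((M : ℝ) * h M ^ q)⁻¹ *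
        (∑ m ∈ Finset.range M, K M ((h M)⁻¹ • (x₀ - X m ω))) - J M| < ε := by
    intro ε hε
    set C : ℝ := π x₀ + 1 with hCdef
    have hC1 : 1 ≤ C := by
      have h0 : (0 : ℝ) ≤ π x₀ := hπ_nonneg x₀
      simp only [hCdef]; linarith
    have hC0 : 0 < C := by linarith
    set t₀ : ℝ := min (ε / (2 * B * C)) (1 / B) with ht₀def
    have ht₀pos : 0 < t₀ := lt_min (by positivity) (by positivity)
    have ht₀le : t₀ ≤ 1 / B := min_le_right _ _
    have htBC : t₀ * (B * C) ≤ ε / 2 := by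
      calc t₀ * (B * C) ≤ (ε / (2 * B * C)) * (B * C) :=
            mul_le_mul_of_nonneg_right (min_le_left _ _) (by positivity)
      _ = ε / 2 := by field_simp
    set c : ℝ := t₀ * ε / 2 with hcdef
    have hcpos : 0 < c := by positivity
    -- the bad events
    set Ev : ℕ → Set Ω := fun M => {ω | ε ≤ |((M : ℝ) * h M ^ q)⁻¹ *
        (∑ m ∈ Finset.range M, K M ((h M)⁻¹ • (x₀ - X m ω))) - J M|} with hEvdef
    -- eventual bound on the probability of the bad events
    have evbound : ∀ᶠ M in atTop, P (Ev M) ≤ ENNReal.ofReal (2 * ((M : ℝ)⁻¹) ^ 2) := by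
      filter_upwards [hJ.eventually (gt_mem_nhds (show π x₀ < C by simp [hCdef])),
        eventually_ge_atTop 2,
        hMh_strong.eventually (eventually_ge_atTop (2 / c))] with M hJC hM2 hMstrong
      have hM0 : (0 : ℝ) < (M : ℝ) := by
        have : (0 : ℕ) < M := by omega
        exact_mod_cast this
      have hM1 : (1 : ℝ) < (M : ℝ) := by
        have : (1 : ℕ) < M := by omega
        exact_mod_cast this
      set p : ℝ := (M : ℝ) * h M ^ q with hpdef
      have hppos : 0 < p := by
        have := hh_pos M
        positivity
      set μ : ℝ := ∫ x, π x * g M x with hμdef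
      have hμ_eq : μ = h M ^ q * J M := hCV M
      have hμle : μ ≤ h M ^ q * C := by
        rw [hμ_eq]
        have hq : (0 : ℝ) < h M ^ q := by have := hh_pos M; positivity
        exact mul_le_mul_of_nonneg_left hJC.le hq.le
      set s : ℝ := p * ε with hsdef
      -- the two one-sided events
      set A1 : Set Ω := {ω | (M : ℝ) * μ + s ≤ ∑ m ∈ Finset.range M, g M (X m ω)} with hA1def
      set A2 : Set Ω := {ω | ∑ m ∈ Finset.range M, g M (X m ω) ≤ (M : ℝ) * μ - s} with hA2def
      have hsub : Ev M ⊆ A1 ∪ A2 := by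
        intro ω hω
        simp only [hEvdef, Set.mem_setOf_eq] at hω
        have hsum_eq : (∑ m ∈ Finset.range M, K M ((h M)⁻¹ • (x₀ - X m ω)))
            = ∑ m ∈ Finset.range M, g M (X m ω) := rfl
        rw [hsum_eq] at hω
        set Sf : ℝ := ∑ m ∈ Finset.range M, g M (X m ω) with hSfdef
        have hMμ : (M : ℝ) * μ = p * J M := by rw [hμ_eq, hpdef]; ring
        have hrw : p⁻¹ * Sf - J M = p⁻¹ * (Sf - (M : ℝ) * μ) := by
          rw [hMμ]
          field_simp
        rw [hrw, abs_mul, abs_of_nonneg (inv_nonneg.2 hppos.le)] at hω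
        have habs : s ≤ |Sf - (M : ℝ) * μ| := by
          rw [hsdef]
          calc p * ε ≤ p * (p⁻¹ * |Sf - (M : ℝ) * μ|) :=
                mul_le_mul_of_nonneg_left hω hppos.le
          _ = |Sf - (M : ℝ) * μ| := by field_simp
        rcases le_abs.1 habs with h' | h'
        · exact Or.inl (by simp only [hA1def, Set.mem_setOf_eq]; linarith)
        · exact Or.inr (by simp only [hA2def, Set.mem_setOf_eq]; linarith)
      -- apply the Chernoff tail bound
      have htail := tail_bound (P := P) (Y := fun m ω => g M (X m ω))
        (fun m => (hg_meas M).comp (hX_meas m))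
        (hX_indep.comp (fun _ => g M) (fun _ => hg_meas M))
        hB (fun m ω => hK_nonneg M _) (fun m ω => hK_bdd M _)
        (μ := μ) (fun m => hmean M m) M ht₀pos.le ht₀le s
      -- bound the exponent
      have hexp1 : -(t₀ * s) + (M : ℝ) * (t₀ ^ 2 * B * μ) ≤ -(c * p) := by
        have h1 : (M : ℝ) * (t₀ ^ 2 * B * μ) ≤ (M : ℝ) * (t₀ ^ 2 * B * (h M ^ q * C)) := by
          refine mul_le_mul_of_nonneg_left ?_ hM0.le
          refine mul_le_mul_of_nonneg_left hμle ?_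
          positivity
        have h2 : (M : ℝ) * (t₀ ^ 2 * B * (h M ^ q * C)) = p * (t₀ * (t₀ * (B * C))) := by
          rw [hpdef]; ring
        have h3 : p * (t₀ * (t₀ * (B * C))) ≤ p * (t₀ * (ε / 2)) := by
          refine mul_le_mul_of_nonneg_left ?_ hppos.le
          exact mul_le_mul_of_nonneg_left htBC ht₀pos.le
        have h4 : t₀ * s = 2 * (c * p) := by rw [hsdef, hcdef]; ring
        have h5 : p * (t₀ * (ε / 2)) = c * p := by rw [hcdef]; ring
        have h6 : (M : ℝ) * (t₀ ^ 2 * B * μ) ≤ c * p := by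
          rw [← h5]; exact (h1.trans_eq h2).trans h3
        calc -(t₀ * s) + (M : ℝ) * (t₀ ^ 2 * B * μ)
            ≤ -(t₀ * s) + c * p := add_le_add_right h6 _
        _ = -(2 * (c * p)) + c * p := by rw [h4]
        _ = -(c * p) := by ring
      have hlog : 0 < Real.log M := Real.log_pos hM1
      have hcp : 2 * Real.log M ≤ c * p := by
        have := (div_le_div_iff₀ hcpos hlog).1 hMstrong
        linarith
      have hexp2 : Real.exp (-(c * p)) ≤ ((M : ℝ)⁻¹) ^ 2 := by
        calc Real.exp (-(c * p)) ≤ Real.exp (-(2 * Real.log M)) :=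
              Real.exp_le_exp.2 (by linarith)
        _ = ((M : ℝ)⁻¹) ^ 2 := by
              rw [show -(2 * Real.log (M : ℝ)) = -Real.log M + -Real.log M by ring,
                Real.exp_add, Real.exp_neg, Real.exp_log hM0]
              ring
      -- assemble the measure bound
      have hPE : P (Ev M) ≤ P A1 + P A2 := (measure_mono hsub).trans (measure_union_le _ _)
      have hPA : P A1 + P A2 ≤ ENNReal.ofReal (2 * ((M : ℝ)⁻¹) ^ 2) := by
        rw [← ENNReal.ofReal_toReal (measure_ne_top P A1),
          ← ENNReal.ofReal_toReal (measure_ne_top P A2),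
          ← ENNReal.ofReal_add ENNReal.toReal_nonneg ENNReal.toReal_nonneg]
        refine ENNReal.ofReal_le_ofReal ?_
        calc (P A1).toReal + (P A2).toReal
            ≤ 2 * Real.exp (-(t₀ * s) + (M : ℝ) * (t₀ ^ 2 * B * μ)) := htail
        _ ≤ 2 * ((M : ℝ)⁻¹) ^ 2 := by
              have := (Real.exp_le_exp.2 hexp1).trans hexp2
              linarith
      exact hPE.trans hPA
    -- Borel–Cantelli
    obtain ⟨N₀, hN₀⟩ := eventually_atTop.1 evbound
    set N : ℕ := N₀ + 1 with hNdef
    have hsummable : Summable (fun M : ℕ => 2 * (((M : ℝ) + 1)⁻¹) ^ 2) := by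
      have h0 : Summable (fun n : ℕ => 1 / (n : ℝ) ^ 2) := Real.summable_one_div_nat_pow.2 one_lt_two
      have h1 : Summable (fun n : ℕ => 1 / ((n : ℝ) + 1) ^ 2) := by
        have := (summable_nat_add_iff (f := fun n : ℕ => 1 / (n : ℝ) ^ 2) 1).2 h0
        refine this.congr fun n => ?_
        push_cast
        ring
      refine (h1.mul_left 2).congr fun n => ?_
      rw [one_div, inv_pow]
    have hsum : (∑' M : ℕ, P (Ev (M + N))) ≠ ⊤ := by
      have hle : ∀ M : ℕ, P (Ev (M + N)) ≤ ENNReal.ofReal (2 * (((M : ℝ) + 1)⁻¹) ^ 2) := by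
        intro M
        refine (hN₀ (M + N) (by omega)).trans (ENNReal.ofReal_le_ofReal ?_)
        have hmono : ((M + N : ℕ) : ℝ)⁻¹ ≤ ((M : ℝ) + 1)⁻¹ := by
          refine inv_anti₀ (by positivity) ?_
          push_cast
          have : (1 : ℝ) ≤ N := by exact_mod_cast Nat.one_le_iff_ne_zero.2 (by omega)
          linarith
        have hsq : (((M + N : ℕ) : ℝ)⁻¹) ^ 2 ≤ (((M : ℝ) + 1)⁻¹) ^ 2 :=
          pow_le_pow_left₀ (by positivity) hmono 2
        linarith
      have hcalc : (∑' M : ℕ, P (Ev (M + N)))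
          ≤ ENNReal.ofReal (∑' M : ℕ, 2 * (((M : ℝ) + 1)⁻¹) ^ 2) := by
        calc (∑' M : ℕ, P (Ev (M + N)))
            ≤ ∑' M : ℕ, ENNReal.ofReal (2 * (((M : ℝ) + 1)⁻¹) ^ 2) := ENNReal.tsum_le_tsum hle
        _ = ENNReal.ofReal (∑' M : ℕ, 2 * (((M : ℝ) + 1)⁻¹) ^ 2) :=
            (ENNReal.ofReal_tsum_of_nonneg (fun n => by positivity) hsummable).symm
      exact ne_top_of_le_ne_top ENNReal.ofReal_ne_top hcalc
    filter_upwards [MeasureTheory.ae_eventually_notMem hsum] with ω hω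
    rw [eventually_atTop] at hω ⊢
    obtain ⟨N₁, hN₁⟩ := hω
    refine ⟨N₁ + N, fun M hM => ?_⟩
    have h2 := hN₁ (M - N) (by omega)
    rw [Nat.sub_add_cancel (by omega)] at h2
    simp only [hEvdef, Set.mem_setOf_eq] at h2
    exact not_le.1 h2
  -- combine over a countable family of ε and with the bias convergence
  have key' : ∀ᵐ ω ∂P, ∀ k : ℕ, ∀ᶠ M : ℕ in atTop,
      |((M : ℝ) * h M ^ q)⁻¹ *
        (∑ m ∈ Finset.range M, K M ((h M)⁻¹ • (x₀ - X m ω))) - J M| < ((k : ℝ) + 1)⁻¹ := by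
    rw [ae_all_iff]
    exact fun k => key _ (by positivity)
  filter_upwards [key'] with ω hω
  have hdiff : Tendsto (fun M : ℕ => ((M : ℝ) * h M ^ q)⁻¹ *
      (∑ m ∈ Finset.range M, K M ((h M)⁻¹ • (x₀ - X m ω))) - J M) atTop (nhds 0) := by
    rw [Metric.tendsto_atTop]
    intro ε' hε'
    obtain ⟨k, hk⟩ := exists_nat_one_div_lt hε'
    obtain ⟨N, hN⟩ := eventually_atTop.1 (hω k)
    refine ⟨N, fun M hM => ?_⟩
    rw [Real.dist_eq, sub_zero]
    calc |((M : ℝ) * h M ^ q)⁻¹ *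
        (∑ m ∈ Finset.range M, K M ((h M)⁻¹ • (x₀ - X m ω))) - J M| < ((k : ℝ) + 1)⁻¹ :=
          hN M hM
    _ < ε' := by rwa [one_div] at hk
  have hfin := hdiff.add hJ
  rw [zero_add] at hfin
  refine hfin.congr fun M => ?_
  ring
end
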